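/- Let s be a nonnegative integer. Every P_4-sparse finite simple graph that is a minimal (s,1)-polar obstruction is a cograph (that is, it contains no induced path on four vertices). -/

import Mathlib

open SimpleGraph

universe u v

/-! ### Basic predicates -/

/-- `B` induces a disjoint union of complete graphs in `G` (i.e. `G[B]` is a cluster). -/
def IsClusterSet {V : Type*} (G : SimpleGraph V) (B : Set V) : Prop :=
  ∀ ⦃u w x : V⦄, u ∈ B → w ∈ B → x ∈ B → G.Adj u w → G.Adj w x → u ≠ x → G.Adj u x

/-- `A` induces a complete multipartite graph in `G`
(the complement of `G[A]` is a disjoint union of cliques). -/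
def IsCompleteMultipartiteSet {V : Type*} (G : SimpleGraph V) (A : Set V) : Prop :=
  ∀ ⦃u w x : V⦄, u ∈ A → w ∈ A → x ∈ A → u ≠ w → w ≠ x → u ≠ x →
    ¬ G.Adj u w → ¬ G.Adj w x → ¬ G.Adj u x

/-- `A` is an independent set of `G`. -/
def IsIndepSet {V : Type*} (G : SimpleGraph V) (A : Set V) : Prop :=
  ∀ ⦃u w : V⦄, u ∈ A → w ∈ A → ¬ G.Adj u w

/-- `G[B]` is a disjoint union of at most `k` complete graphs. -/
def IsClusterSetLE {V : Type*} (G : SimpleGraph V) (k : ℕ) (B : Set V) : Prop :=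
  ∃ g : B → Fin k, ∀ u w : B, u ≠ w → (G.Adj u w ↔ g u = g w)

/-- `G[A]` is a complete multipartite graph with at most `s` parts. -/
def IsCompleteMultipartiteSetLE {V : Type*} (G : SimpleGraph V) (s : ℕ) (A : Set V) : Prop :=
  ∃ f : A → Fin s, ∀ u w : A, G.Adj u w ↔ f u ≠ f w

/-! ### Polarity properties -/

/-- `G` is unipolar: a partition `(A, Aᶜ)` with `A` a clique and `G[Aᶜ]` a cluster. -/
def Unipolar {V : Type*} (G : SimpleGraph V) : Prop :=
  ∃ A : Set V, G.IsClique A ∧ IsClusterSet G Aᶜ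

/-- `G` is monopolar ((1,∞)-polar). -/
def Monopolar {V : Type*} (G : SimpleGraph V) : Prop :=
  ∃ A : Set V, _root_.IsIndepSet G A ∧ IsClusterSet G Aᶜ

/-- `G` is polar ((∞,∞)-polar). -/
def Polar {V : Type*} (G : SimpleGraph V) : Prop :=
  ∃ A : Set V, IsCompleteMultipartiteSet G A ∧ IsClusterSet G Aᶜ

/-- `G` is (s,1)-polar. -/
def SOnePolar {V : Type*} (s : ℕ) (G : SimpleGraph V) : Prop :=
  ∃ A : Set V, IsCompleteMultipartiteSetLE G s A ∧ G.IsClique Aᶜ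

/-- `G` is (∞,1)-polar. -/
def InfOnePolar {V : Type*} (G : SimpleGraph V) : Prop :=
  ∃ A : Set V, IsCompleteMultipartiteSet G A ∧ G.IsClique Aᶜ

/-- `G` is (1,k)-polar. -/
def OneKPolar {V : Type*} (k : ℕ) (G : SimpleGraph V) : Prop :=
  ∃ A : Set V, _root_.IsIndepSet G A ∧ IsClusterSetLE G k Aᶜ

/-! ### Minimal obstructions -/

def MinUnipolarObstruction {V : Type*} (G : SimpleGraph V) : Prop :=
  ¬ Unipolar G ∧ ∀ s : Set V, s ≠ Set.univ → Unipolar (G.induce s)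

def MinMonopolarObstruction {V : Type*} (G : SimpleGraph V) : Prop :=
  ¬ Monopolar G ∧ ∀ s : Set V, s ≠ Set.univ → Monopolar (G.induce s)

def MinPolarObstruction {V : Type*} (G : SimpleGraph V) : Prop :=
  ¬ Polar G ∧ ∀ s : Set V, s ≠ Set.univ → Polar (G.induce s)

def MinSOnePolarObstruction {V : Type*} (s : ℕ) (G : SimpleGraph V) : Prop :=
  ¬ SOnePolar s G ∧ ∀ t : Set V, t ≠ Set.univ → SOnePolar s (G.induce t)

def MinInfOnePolarObstruction {V : Type*} (G : SimpleGraph V) : Prop :=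
  ¬ InfOnePolar G ∧ ∀ t : Set V, t ≠ Set.univ → InfOnePolar (G.induce t)

def MinOneKPolarObstruction {V : Type*} (k : ℕ) (G : SimpleGraph V) : Prop :=
  ¬ OneKPolar k G ∧ ∀ t : Set V, t ≠ Set.univ → OneKPolar k (G.induce t)

/-! ### Graph constructions -/

/-- The join of two graphs: all edges added between the summands. -/
def joinG {α β : Type*} (G : SimpleGraph α) (H : SimpleGraph β) : SimpleGraph (α ⊕ β) where
  Adj x y := (G ⊕g H).Adj x y ∨ (x.isLeft ∧ y.isRight) ∨ (x.isRight ∧ y.isLeft)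
  symm := ⟨fun x y h => by
    rcases h with h | ⟨h1, h2⟩ | ⟨h1, h2⟩
    · exact Or.inl ((G ⊕g H).adj_symm h)
    · exact Or.inr (Or.inr ⟨h2, h1⟩)
    · exact Or.inr (Or.inl ⟨h2, h1⟩)⟩
  loopless := ⟨fun x h => by
    rcases h with h | ⟨h1, h2⟩ | ⟨h1, h2⟩
    · exact (G ⊕g H).irrefl h
    · cases x <;> simp_all
    · cases x <;> simp_all⟩

/-- `K_n`, the complete graph on `n` vertices. -/
def KG (n : ℕ) : SimpleGraph (Fin n) := ⊤

/-- `n K_1`, the edgeless graph on `n` vertices. -/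
def EG (n : ℕ) : SimpleGraph (Fin n) := ⊥

/-- The banner graph `P`: a four-cycle `0 1 2 3` with a pendant vertex `4` adjacent to `0`. -/
def banner : SimpleGraph (Fin 5) :=
  SimpleGraph.fromEdgeSet {s(0, 1), s(1, 2), s(2, 3), s(3, 0), s(0, 4)}

/-- The chair (fork) graph `F`: a path `0 1 2 3` with an extra vertex `4` adjacent to `1`. -/
def chair : SimpleGraph (Fin 5) :=
  SimpleGraph.fromEdgeSet {s(0, 1), s(1, 2), s(2, 3), s(1, 4)}

/-- `2P_3`. -/
def twoP3 : SimpleGraph (Fin 3 ⊕ Fin 3) := pathGraph 3 ⊕g pathGraph 3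

/-- `K_{2,3}`. -/
def K23 : SimpleGraph (Fin 2 ⊕ Fin 3) := completeBipartiteGraph (Fin 2) (Fin 3)

/-- The seven graphs `E1, E2, E3, E7, E10, E11, E12`. -/
def E1 : SimpleGraph (Fin 1 ⊕ (Fin 2 ⊕ Fin 2)) := KG 1 ⊕g (KG 2 ⊕g KG 2)
def E2 : SimpleGraph (Fin 3 ⊕ Fin 3) := pathGraph 3 ⊕g pathGraph 3
def E3 : SimpleGraph (Fin 4 ⊕ Fin 2) := cycleGraph 4 ⊕g EG 2
def E7 : SimpleGraph (Fin 1 ⊕ (Fin 3 ⊕ Fin 2)) := KG 1 ⊕g (pathGraph 3 ⊕g KG 2)ᶜ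
def E10 : SimpleGraph (Fin 1 ⊕ Fin 5) := KG 1 ⊕g cycleGraph 5
def E11 : SimpleGraph (Fin 1 ⊕ Fin 5) := KG 1 ⊕g banner
def E12 : SimpleGraph (Fin 1 ⊕ Fin 5) := KG 1 ⊕g (pathGraph 5)ᶜ

/-! ### P4 structure -/

/-- `W` induces a path on four vertices in `G`. -/
def InducesP4 {V : Type*} (G : SimpleGraph V) (W : Set V) : Prop :=
  Nonempty (G.induce W ≃g pathGraph 4)

/-- A graph is a cograph if it has no induced `P_4`. -/
def Cograph {V : Type*} (G : SimpleGraph V) : Prop :=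
  ∀ W : Set V, ¬ InducesP4 G W

/-- `G` is `P_4`-sparse: any five vertices induce at most one `P_4`. -/
def P4Sparse {V : Type*} (G : SimpleGraph V) : Prop :=
  ∀ s : Set V, s.ncard = 5 → ∀ W₁ W₂ : Set V, W₁ ⊆ s → W₂ ⊆ s →
    InducesP4 G W₁ → InducesP4 G W₂ → W₁ = W₂

/-- `G` is `P_4`-extendible. -/
def P4Extendible {V : Type*} (G : SimpleGraph V) : Prop :=
  ∀ W : Set V, InducesP4 G W →
    ∀ v₁ v₂ : V, v₁ ∉ W → v₂ ∉ W →
      (∃ W₁ : Set V, InducesP4 G W₁ ∧ v₁ ∈ W₁ ∧ (W₁ ∩ W).Nonempty) →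
      (∃ W₂ : Set V, InducesP4 G W₂ ∧ v₂ ∈ W₂ ∧ (W₂ ∩ W).Nonempty) → v₁ = v₂

/-! ### Spiders -/

/-- `(S, K, R)` is a spider partition of `G`. -/
def IsSpiderPartition {V : Type*} (G : SimpleGraph V) (S K R : Set V) : Prop :=
  S ∪ K ∪ R = Set.univ ∧ Disjoint S K ∧ Disjoint S R ∧ Disjoint K R ∧
  S.ncard = K.ncard ∧ 2 ≤ K.ncard ∧
  G.IsClique K ∧ _root_.IsIndepSet G S ∧
  (∃ f : S → K, Function.Bijective f ∧
    ((∀ s : S, ∀ k : K, G.Adj s k ↔ (f s : V) = k) ∨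
     (∀ s : S, ∀ k : K, G.Adj s k ↔ (f s : V) ≠ k))) ∧
  (∀ r ∈ R, ∀ k ∈ K, G.Adj r k) ∧
  (∀ r ∈ R, ∀ s ∈ S, ¬ G.Adj r s)

/-- `G` is a `B`-spider with partition `(S, K, R)`, where `B` is a fixed base graph with
midpoint set `M` and endpoint set `E`: `G` is obtained from a copy of `B` (whose midpoints
form `K` and whose endpoints form `S`) by adding the set `R` of vertices, each adjacent to
all midpoints and to no endpoint. -/
def IsBaseSpider {n : ℕ} {V : Type*} (B : SimpleGraph (Fin n)) (M E : Set (Fin n))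
    (G : SimpleGraph V) (S K R : Set V) : Prop :=
  ∃ f : Fin n → V, Function.Injective f ∧
    (∀ i j : Fin n, G.Adj (f i) (f j) ↔ B.Adj i j) ∧
    K = f '' M ∧ S = f '' E ∧ R = (Set.range f)ᶜ ∧
    (∀ r ∈ R, ∀ x ∈ K, G.Adj r x) ∧
    (∀ r ∈ R, ∀ x ∈ S, ¬ G.Adj r x)

/-!
Let `a b c d` be an induced `P₄`. By `P₄`-sparseness no other induced `P₄` lies inside
`{a, b, c, d, v}` for a further vertex `v`, so `v` sees none of the path, exactly its midpoints
`b c`, or all of it. Take an `(s,1)`-partition `(A, K)` of `G - b`. If `a ∈ K`, or if `a, d ∈ A`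
(which forces `c ∈ K`), every vertex of `K` is adjacent to `b`, so `(A, K + b)` partitions `G`.
Otherwise `a ∈ A` and `d ∈ K`; then `d` is a false twin of `a` on `A - c`, and
`(A - c + d, K - d + b + c)` partitions `G`. So `G` is `(s,1)`-polar after all.
-/

section

variable {V : Type*} {G : SimpleGraph V}

lemma range_vec_four (a b c d : V) : Set.range ![a, b, c, d] = {a, b, c, d} := by
  ext; simp [or_comm, or_left_comm]

/-- The four vertices are automatically distinct: e.g. `a ≠ c` because `c ~ d` but `a ≁ d`. -/
structure IsInducedPath4 (G : SimpleGraph V) (a b c d : V) : Prop where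
  adj_ab : G.Adj a b
  adj_bc : G.Adj b c
  adj_cd : G.Adj c d
  not_adj_ac : ¬ G.Adj a c
  not_adj_ad : ¬ G.Adj a d
  not_adj_bd : ¬ G.Adj b d

namespace IsInducedPath4

variable {a b c d : V}

lemma symm (h : IsInducedPath4 G a b c d) : IsInducedPath4 G d c b a :=
  ⟨h.adj_cd.symm, h.adj_bc.symm, h.adj_ab.symm, fun h' => h.not_adj_bd h'.symm,
    fun h' => h.not_adj_ad h'.symm, fun h' => h.not_adj_ac h'.symm⟩

lemma adj_iff (h : IsInducedPath4 G a b c d) (i j : Fin 4) :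
    G.Adj (![a, b, c, d] i) (![a, b, c, d] j) ↔ (pathGraph 4).Adj i j := by
  fin_cases i <;> fin_cases j <;>
    simp [pathGraph_adj, G.adj_comm, h.adj_ab, h.adj_bc, h.adj_cd, h.not_adj_ac, h.not_adj_ad,
      h.not_adj_bd]

lemma injective (h : IsInducedPath4 G a b c d) : Function.Injective ![a, b, c, d] := by
  have hP4 : ∀ i j : Fin 4,
      (∀ k, (pathGraph 4).Adj i k ↔ (pathGraph 4).Adj j k) → i = j := by
    simp only [pathGraph_adj]; decide
  intro i j hij
  exact hP4 i j fun k => (h.adj_iff i k).symm.trans (hij ▸ h.adj_iff j k)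

def embedding (h : IsInducedPath4 G a b c d) : pathGraph 4 ↪g G :=
  ⟨⟨![a, b, c, d], h.injective⟩, h.adj_iff _ _⟩

lemma inducesP4 (h : IsInducedPath4 G a b c d) : InducesP4 G {a, b, c, d} :=
  ⟨range_vec_four a b c d ▸ h.embedding.isoInduceRange.symm⟩

lemma ncard_eq (h : IsInducedPath4 G a b c d) : ({a, b, c, d} : Set V).ncard = 4 := by
  rw [← range_vec_four, Set.ncard_range_of_injective h.injective, Nat.card_fin]

lemma of_embedding (φ : pathGraph 4 ↪g G) : IsInducedPath4 G (φ 0) (φ 1) (φ 2) (φ 3) := by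
  refine ⟨?_, ?_, ?_, ?_, ?_, ?_⟩ <;> simp [pathGraph_adj]

end IsInducedPath4

lemma InducesP4.exists_isInducedPath4 {W : Set V} (h : InducesP4 G W) :
    ∃ a b c d, IsInducedPath4 G a b c d := by
  obtain ⟨e⟩ := h
  exact ⟨_, _, _, _, .of_embedding ((Embedding.induce W).comp e.symm.toEmbedding)⟩

namespace P4Sparse

variable {a b c d v : V}

lemma notMem_of_isInducedPath4 (hG : P4Sparse G) (h : IsInducedPath4 G a b c d)
    (hv : v ∉ ({a, b, c, d} : Set V)) {x y z w : V} (h' : IsInducedPath4 G x y z w)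
    (hsub : ({x, y, z, w} : Set V) ⊆ insert v {a, b, c, d}) : v ∉ ({x, y, z, w} : Set V) := by
  have h5 : (insert v ({a, b, c, d} : Set V)).ncard = 5 := by
    rw [Set.ncard_insert_of_notMem hv, h.ncard_eq]
  rwa [hG _ h5 _ _ hsub (Set.subset_insert _ _) h'.inducesP4 h.inducesP4]

lemma adj_all_of_adj_first (hG : P4Sparse G) (h : IsInducedPath4 G a b c d)
    (hv : v ∉ ({a, b, c, d} : Set V)) (hva : G.Adj v a) :
    G.Adj v b ∧ G.Adj v c ∧ G.Adj v d := by
  have hno {x y z w : V} (h' : IsInducedPath4 G x y z w) := hG.notMem_of_isInducedPath4 h hv h'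
  have hvd : G.Adj v d := by
    by_contra hvd
    by_cases hvc : G.Adj v c
    · exact hno ⟨hva.symm, hvc, h.adj_cd, h.not_adj_ac, h.not_adj_ad, hvd⟩
        (by simp [Set.insert_subset_iff]) (by simp)
    by_cases hvb : G.Adj v b
    · exact hno ⟨hvb, h.adj_bc, h.adj_cd, hvc, hvd, h.not_adj_bd⟩
        (by simp [Set.insert_subset_iff]) (by simp)
    · exact hno ⟨hva, h.adj_ab, h.adj_bc, hvb, hvc, h.not_adj_ac⟩
        (by simp [Set.insert_subset_iff]) (by simp)
  refine ⟨?_, ?_, hvd⟩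
  · by_contra hvb
    exact hno ⟨h.adj_ab.symm, hva.symm, hvd, fun e => hvb e.symm, h.not_adj_bd, h.not_adj_ad⟩
      (by simp [Set.insert_subset_iff]) (by simp)
  · by_contra hvc
    exact hno ⟨hva.symm, hvd, h.adj_cd.symm, h.not_adj_ad, h.not_adj_ac, hvc⟩
      (by simp [Set.insert_subset_iff]) (by simp)

lemma adj_third_of_adj_second (hG : P4Sparse G) (h : IsInducedPath4 G a b c d)
    (hv : v ∉ ({a, b, c, d} : Set V)) (hvd : ¬ G.Adj v d) (hvb : G.Adj v b) : G.Adj v c := by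
  by_contra hvc
  exact hG.notMem_of_isInducedPath4 h hv ⟨hvb, h.adj_bc, h.adj_cd, hvc, hvd, h.not_adj_bd⟩
    (by simp [Set.insert_subset_iff]) (by simp)

lemma adj_all_of_adj_last (hG : P4Sparse G) (h : IsInducedPath4 G a b c d)
    (hv : v ∉ ({a, b, c, d} : Set V)) (hvd : G.Adj v d) :
    G.Adj v a ∧ G.Adj v b ∧ G.Adj v c := by
  have hv' : v ∉ ({d, c, b, a} : Set V) := by simpa [or_comm, or_left_comm] using hv
  obtain ⟨hvc, hvb, hva⟩ := hG.adj_all_of_adj_first h.symm hv' hvd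
  exact ⟨hva, hvb, hvc⟩

lemma adj_second_of_adj_third (hG : P4Sparse G) (h : IsInducedPath4 G a b c d)
    (hv : v ∉ ({a, b, c, d} : Set V)) (hvc : G.Adj v c) : G.Adj v b := by
  by_cases hva : G.Adj v a
  · exact (hG.adj_all_of_adj_first h hv hva).1
  · have hv' : v ∉ ({d, c, b, a} : Set V) := by simpa [or_comm, or_left_comm] using hv
    exact hG.adj_third_of_adj_second h.symm hv' hva hvc

end P4Sparse

namespace IsCompleteMultipartiteSetLE

variable {s : ℕ} {A : Set V}

lemma mono (h : IsCompleteMultipartiteSetLE G s A) {B : Set V} (hBA : B ⊆ A) :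
    IsCompleteMultipartiteSetLE G s B :=
  let ⟨f, hf⟩ := h
  ⟨fun x => f ⟨x, hBA x.2⟩, fun u w => hf ⟨u, hBA u.2⟩ ⟨w, hBA w.2⟩⟩

lemma not_adj_of_not_adj (h : IsCompleteMultipartiteSetLE G s A) {u v w : V} (hu : u ∈ A)
    (hv : v ∈ A) (hw : w ∈ A) (huv : ¬ G.Adj u v) (huw : ¬ G.Adj u w) : ¬ G.Adj v w := by
  obtain ⟨f, hf⟩ := h
  rw [hf ⟨u, hu⟩ ⟨v, hv⟩, not_not] at huv
  rw [hf ⟨u, hu⟩ ⟨w, hw⟩, not_not] at huw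
  rw [hf ⟨v, hv⟩ ⟨w, hw⟩, not_not, ← huv, huw]

lemma insert_of_twin (h : IsCompleteMultipartiteSetLE G s A) {u d : V} (hu : u ∈ A)
    (hd : d ∉ A) (hdu : ¬ G.Adj d u)
    (htwin : ∀ w ∈ A, w ≠ u → (G.Adj d w ↔ G.Adj u w)) :
    IsCompleteMultipartiteSetLE G s (insert d A) := by
  classical
  obtain ⟨f, hf⟩ := h
  let F : V → Fin s := fun x => if hx : x ∈ A then f ⟨x, hx⟩ else f ⟨u, hu⟩
  have hFd : ∀ w ∈ A, (G.Adj d w ↔ F d ≠ F w) := by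
    intro w hw
    by_cases hwu : w = u
    · subst hwu
      simp [F, hd, hw, hdu]
    · simp only [F, dif_neg hd, dif_pos hw]
      rw [htwin w hw hwu, hf ⟨u, hu⟩ ⟨w, hw⟩]
  refine ⟨fun x => F x, ?_⟩
  rintro ⟨x, hx | hx⟩ ⟨y, hy | hy⟩
  · subst hx hy; simp
  · subst hx; exact hFd y hy
  · subst hy; rw [G.adj_comm, ne_comm]; exact hFd x hx
  · simp only [F, dif_pos hx, dif_pos hy]
    exact hf ⟨x, hx⟩ ⟨y, hy⟩

lemma map {W : Type*} {H : SimpleGraph W} {B : Set W} (h : IsCompleteMultipartiteSetLE H s B)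
    (φ : H ↪g G) : IsCompleteMultipartiteSetLE G s (φ '' B) := by
  obtain ⟨f, hf⟩ := h
  let e := Equiv.Set.image φ B φ.injective
  refine ⟨fun x => f (e.symm x), fun x y => ?_⟩
  obtain ⟨x, rfl⟩ := e.surjective x
  obtain ⟨y, rfl⟩ := e.surjective y
  simpa [e] using hf x y

end IsCompleteMultipartiteSetLE

lemma SOnePolar.exists_of_induce {s : ℕ} {t : Set V} (h : SOnePolar s (G.induce t)) :
    ∃ A ⊆ t, IsCompleteMultipartiteSetLE G s A ∧ G.IsClique (t \ A) := by
  obtain ⟨A, hA, hK⟩ := h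
  refine ⟨Subtype.val '' A, by simp, hA.map (Embedding.induce t), ?_⟩
  rw [← Set.image_val_compl]
  exact isClique_induce_iff.1 hK

lemma sOnePolar_of_forall_adj {s : ℕ} {A : Set V} {b : V}
    (hA : IsCompleteMultipartiteSetLE G s A) (hK : G.IsClique ({b}ᶜ \ A))
    (hb : ∀ z ∈ {b}ᶜ \ A, G.Adj z b) : SOnePolar s G := by
  refine ⟨A, hA, (isClique_insert.2 ⟨hK, fun z hz _ => (hb z hz).symm⟩).subset
    fun x hx => ?_⟩
  by_cases hxb : x = b <;> simp_all

namespace P4Sparse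

variable {s : ℕ} {a b c d : V} {A : Set V}

lemma sOnePolar_of_notMem_first (hG : P4Sparse G) (h : IsInducedPath4 G a b c d)
    (hA : IsCompleteMultipartiteSetLE G s A) (hK : G.IsClique ({b}ᶜ \ A)) (haA : a ∉ A) :
    SOnePolar s G := by
  refine sOnePolar_of_forall_adj hA hK fun z hz => ?_
  by_cases hza : z = a
  · exact hza ▸ h.adj_ab
  have hza' : G.Adj z a := hK hz ⟨h.adj_ab.ne, haA⟩ hza
  have hzP : z ∉ ({a, b, c, d} : Set V) := by
    rintro (rfl | rfl | rfl | rfl)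
    exacts [hza rfl, hz.1 rfl, h.not_adj_ac hza'.symm, h.not_adj_ad hza'.symm]
  exact (hG.adj_all_of_adj_first h hzP hza').1

lemma sOnePolar_of_mem_first_of_mem_last (hG : P4Sparse G) (h : IsInducedPath4 G a b c d)
    (hA : IsCompleteMultipartiteSetLE G s A) (hK : G.IsClique ({b}ᶜ \ A)) (haA : a ∈ A)
    (hdA : d ∈ A) : SOnePolar s G := by
  have hcA : c ∉ A := fun hcA =>
    hA.not_adj_of_not_adj haA hcA hdA h.not_adj_ac h.not_adj_ad h.adj_cd
  refine sOnePolar_of_forall_adj hA hK fun z hz => ?_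
  by_cases hzc : z = c
  · exact hzc ▸ h.adj_bc.symm
  have hzc' : G.Adj z c := hK hz ⟨h.adj_bc.ne', hcA⟩ hzc
  have hzP : z ∉ ({a, b, c, d} : Set V) := by
    rintro (rfl | rfl | rfl | rfl)
    exacts [hz.2 haA, hz.1 rfl, hzc rfl, hz.2 hdA]
  exact hG.adj_second_of_adj_third h hzP hzc'

/-- Trade `c` for `d`: `d` joins the part of `a`, while `b` and `c` join the clique. -/
lemma sOnePolar_of_mem_first_of_notMem_last (hG : P4Sparse G) (h : IsInducedPath4 G a b c d)
    (hA : IsCompleteMultipartiteSetLE G s A) (hbA : b ∉ A) (hK : G.IsClique ({b}ᶜ \ A))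
    (haA : a ∈ A) (hdA : d ∉ A) : SOnePolar s G := by
  have hdK : d ∈ ({b}ᶜ \ A) :=
    ⟨fun e => h.not_adj_ad (Set.mem_singleton_iff.1 e ▸ h.adj_ab), hdA⟩
  have hclique : ∀ z ∈ ({b}ᶜ \ A), z ≠ c → z ≠ d → G.Adj z b ∧ G.Adj z c := by
    intro z hz hzc hzd
    have hzP : z ∉ ({a, b, c, d} : Set V) := by
      rintro (rfl | rfl | rfl | rfl)
      exacts [hz.2 haA, hz.1 rfl, hzc rfl, hzd rfl]
    exact (hG.adj_all_of_adj_last h hzP (hK hz hdK hzd)).2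
  have htwin : ∀ w ∈ A \ {c}, w ≠ a → (G.Adj d w ↔ G.Adj a w) := by
    intro w hw hwa
    have hwP : w ∉ ({a, b, c, d} : Set V) := by
      rintro (rfl | rfl | rfl | rfl)
      exacts [hwa rfl, hbA hw.1, hw.2 rfl, hdA hw.1]
    rw [G.adj_comm, G.adj_comm a]
    exact ⟨fun hwd => (hG.adj_all_of_adj_last h hwP hwd).1,
      fun hwa => (hG.adj_all_of_adj_first h hwP hwa).2.2⟩
  refine ⟨insert d (A \ {c}), (hA.mono Set.sdiff_subset).insert_of_twin ⟨haA, ?_⟩ ?_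
    (fun e => h.not_adj_ad e.symm) htwin, ?_⟩
  · exact fun e => h.not_adj_ad (Set.mem_singleton_iff.1 e ▸ h.adj_cd)
  · exact fun hd => hdA hd.1
  have hK' : G.IsClique (insert b (insert c (({b}ᶜ \ A) \ {d}))) := by
    refine isClique_insert.2 ⟨isClique_insert.2 ⟨hK.subset Set.sdiff_subset, ?_⟩, ?_⟩
    · exact fun z hz hcz => (hclique z hz.1 hcz.symm hz.2).2.symm
    · intro z hz _
      by_cases hzc : z = c
      · exact hzc ▸ h.adj_bc
      · have hz := hz.resolve_left hzc
        exact (hclique z hz.1 hzc hz.2).1.symm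
  refine hK'.subset fun x hx => ?_
  by_cases hxb : x = b <;> by_cases hxc : x = c <;> simp_all

end P4Sparse

end

theorem stmt_16_general {V : Type*} (s : ℕ) (G : SimpleGraph V)
    (hsp : P4Sparse G) (hobs : MinSOnePolarObstruction s G) : Cograph G := by
  intro W hW
  obtain ⟨a, b, c, d, hP⟩ := hW.exists_isInducedPath4
  obtain ⟨A, hAb, hA, hK⟩ := (hobs.2 {b}ᶜ (by simp)).exists_of_induce
  apply hobs.1
  by_cases haA : a ∈ A
  · by_cases hdA : d ∈ A
    · exact hsp.sOnePolar_of_mem_first_of_mem_last hP hA hK haA hdA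
    · exact hsp.sOnePolar_of_mem_first_of_notMem_last hP hA (fun h => hAb h rfl) hK haA hdA
  · exact hsp.sOnePolar_of_notMem_first hP hA hK haA

/-- Every `P_4`-sparse minimal `(s,1)`-polar obstruction is a cograph. -/
theorem stmt_16 {V : Type*} [Fintype V] (s : ℕ) (G : SimpleGraph V)
    (hsp : P4Sparse G) (hobs : MinSOnePolarObstruction s G) : Cograph G :=
  stmt_16_general s G hsp hobs
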